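/- arXiv:1510.01349 — 4 statements merged into one kernel-verified Lean document; each statement's English description precedes it below -/
import Mathlib

section
/- Let n ≥ 2, let a_1, …, a_n be positive integers, let g = gcd(a_1, …, a_n), and let m be a positive integer. Then the set {k ∈ ℤ : g ∣ k and h(k; a_1, …, a_n) < m} is bounded above, and the set of positive integers k with g ∣ k and h(k; a_1, …, a_n) < m is finite. (In particular, for every positive integer ℓ the ℓ-th largest multiple of g with fewer than m representations exists.) -/
/-- `repCount a k` is the number of tuples `b` of nonnegative integers with
`k = ∑ i, b i * a i`. -/
noncomputable def repCount {n : ℕ} (a : Fin n → ℤ) (k : ℤ) : ℕ :=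
  Set.ncard {b : Fin n → ℕ | k = ∑ i, (b i : ℤ) * a i}

/-- Bezout for finset gcd over ℤ. -/
lemma bezout_finset {ι : Type*} [DecidableEq ι] (s : Finset ι) (f : ι → ℤ) :
    ∃ c : ι → ℤ, ∑ i ∈ s, c i * f i = s.gcd f := by
  induction s using Finset.induction_on with
  | empty => exact ⟨0, by simp⟩
  | @insert a s ha ih =>
    obtain ⟨c, hc⟩ := ih
    obtain ⟨x, y, hxy⟩ := exists_gcd_eq_mul_add_mul (f a) (s.gcd f)
    refine ⟨fun i => if i = a then x else y * c i, ?_⟩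
    rw [Finset.sum_insert ha, Finset.gcd_insert, hxy]
    simp only [if_pos rfl]
    have : ∑ i ∈ s, (if i = a then x else y * c i) * f i = y * ∑ i ∈ s, c i * f i := by
      rw [Finset.mul_sum]
      refine Finset.sum_congr rfl fun i hi => ?_
      rw [if_neg (by rintro rfl; exact ha hi), mul_assoc]
    rw [this, hc]; simp; ring

/-- Every sufficiently large multiple of the gcd is representable. -/
lemma rep_of_large (n : ℕ) (hn : 0 < n) (a : Fin n → ℤ) (hpos : ∀ i, 0 < a i) :
    ∃ N : ℤ, ∀ k : ℤ, Finset.univ.gcd a ∣ k → N ≤ k →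
      ∃ b : Fin n → ℕ, k = ∑ i, (b i : ℤ) * a i := by
  obtain ⟨c, hc⟩ := bezout_finset Finset.univ a
  set i0 : Fin n := ⟨0, hn⟩ with hi0
  refine ⟨a i0 * ∑ i, a i, fun k hk hNk => ?_⟩
  obtain ⟨t, ht⟩ := hk
  have hsum : ∑ i, (t * c i) * a i = k := by
    rw [ht, ← hc, Finset.sum_mul]; exact Finset.sum_congr rfl fun i _ => by ring
  set r : Fin n → ℤ := fun i => if i = i0 then 0 else (t * c i) % (a i0) with hr
  have hrnonneg : ∀ i, 0 ≤ r i := by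
    intro i; by_cases h : i = i0 <;> simp [hr, h, Int.emod_nonneg _ (hpos i0).ne']
  have hrlt : ∀ i, r i ≤ a i0 := by
    intro i; by_cases h : i = i0
    · simp [hr, h, (hpos i0).le]
    · simp only [hr, h, if_false]; exact (Int.emod_lt_of_pos _ (hpos i0)).le
  have hdvd : a i0 ∣ k - ∑ i, r i * a i := by
    rw [← hsum, ← Finset.sum_sub_distrib]
    refine Finset.dvd_sum fun i _ => ?_
    rw [← sub_mul]
    by_cases h : i = i0
    · subst h; exact Dvd.dvd.mul_left dvd_rfl _
    · refine Dvd.dvd.mul_right ?_ _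
      simp only [hr, h, if_false]
      exact Int.dvd_self_sub_of_emod_eq rfl
  have hnn : 0 ≤ k - ∑ i, r i * a i := by
    have : ∑ i, r i * a i ≤ ∑ i, a i0 * a i := by
      refine Finset.sum_le_sum fun i _ => ?_
      exact mul_le_mul_of_nonneg_right (hrlt i) (hpos i).le
    have h2 : ∑ i, a i0 * a i = a i0 * ∑ i, a i := by rw [Finset.mul_sum]
    omega
  set q : ℤ := (k - ∑ i, r i * a i) / a i0 with hq
  have hqmul : q * a i0 = k - ∑ i, r i * a i := Int.ediv_mul_cancel hdvd
  have hqnn : 0 ≤ q := Int.ediv_nonneg hnn (hpos i0).le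
  refine ⟨fun i => if i = i0 then q.toNat else (r i).toNat, ?_⟩
  have hcast : ∀ i : Fin n, ((if i = i0 then q.toNat else (r i).toNat : ℕ) : ℤ)
      = r i + (if i = i0 then q else 0) := by
    intro i; by_cases h : i = i0
    · simp [h, hr, Int.toNat_of_nonneg hqnn]
    · simp [h, Int.toNat_of_nonneg (hrnonneg i)]
  calc k = (∑ i, r i * a i) + q * a i0 := by rw [hqmul]; ring
  _ = ∑ i, ((if i = i0 then (q.toNat : ℕ) else (r i).toNat : ℕ) : ℤ) * a i := by
      simp only [hcast, add_mul, Finset.sum_add_distrib, ite_mul, zero_mul,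
        Finset.sum_ite_eq', Finset.mem_univ, if_true]

lemma repSet_finite {n : ℕ} (a : Fin n → ℤ) (hpos : ∀ i, 0 < a i) (k : ℤ) :
    {b : Fin n → ℕ | k = ∑ i, (b i : ℤ) * a i}.Finite := by
  refine Set.Finite.subset (Set.Finite.pi (fun i : Fin n => Set.finite_Iic k.toNat)) ?_
  intro b hb
  simp only [Set.mem_setOf_eq] at hb
  refine Set.mem_pi.mpr fun i _ => ?_
  have h1 : (b i : ℤ) ≤ (b i : ℤ) * a i :=
    le_mul_of_one_le_right (by positivity) (hpos i)
  have h2 : (b i : ℤ) * a i ≤ k := by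
    rw [hb]
    exact Finset.single_le_sum (f := fun j => (b j : ℤ) * a j) (fun j _ => mul_nonneg (by positivity) (hpos j).le) (Finset.mem_univ i)
  simp only [Set.mem_Iic]
  omega

lemma repCount_large (n m : ℕ) (hn : 2 ≤ n) (a : Fin n → ℤ) (hpos : ∀ i, 0 < a i) :
    ∃ N : ℤ, ∀ k : ℤ, Finset.univ.gcd a ∣ k → N ≤ k → m ≤ repCount a k := by
  obtain ⟨N0, hN0⟩ := rep_of_large n (by omega) a hpos
  set i0 : Fin n := ⟨0, by omega⟩ with hi0
  set i1 : Fin n := ⟨1, by omega⟩ with hi1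
  have hne : i0 ≠ i1 := by simp [hi0, hi1, Fin.ext_iff]
  refine ⟨N0 + m * (a i0 * a i1), fun k hk hNk => ?_⟩
  set k' : ℤ := k - m * (a i0 * a i1) with hk'
  have hdvd' : Finset.univ.gcd a ∣ k' := by
    refine dvd_sub hk ?_
    exact Dvd.dvd.mul_left ((Finset.gcd_dvd (Finset.mem_univ i0)).mul_right _) _
  obtain ⟨b, hb⟩ := hN0 k' hdvd' (by omega)
  set f : ℕ → (Fin n → ℕ) := fun t i =>
    if i = i0 then b i0 + t * (a i1).toNat
    else if i = i1 then b i1 + (m - t) * (a i0).toNat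
    else b i with hf
  have hmem : ∀ t < m, k = ∑ i, ((f t i : ℕ) : ℤ) * a i := by
    intro t htm
    have hcast : ∀ i : Fin n, ((f t i : ℕ) : ℤ)
        = (b i : ℤ) + (if i = i0 then (t : ℤ) * a i1 else 0)
          + (if i = i1 then ((m : ℤ) - t) * a i0 else 0) := by
      intro i
      by_cases h0 : i = i0
      · subst h0
        simp only [hf, if_pos rfl, if_neg hne, push_cast]
        push_cast [Int.toNat_of_nonneg (hpos i1).le]
        ring
      · by_cases h1 : i = i1
        · subst h1
          simp only [hf, if_neg h0, if_pos rfl, if_neg (Ne.symm hne)]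
          push_cast [Nat.cast_sub htm.le, Int.toNat_of_nonneg (hpos i0).le]
          ring
        · simp [hf, h0, h1]
    have : ∑ i, ((f t i : ℕ) : ℤ) * a i
        = (∑ i, (b i : ℤ) * a i) + (t : ℤ) * a i1 * a i0 + ((m : ℤ) - t) * a i0 * a i1 := by
      simp only [hcast, add_mul, Finset.sum_add_distrib, ite_mul, zero_mul,
        Finset.sum_ite_eq', Finset.mem_univ, if_true]
    rw [this, ← hb, hk']
    ring
  have hinj : Set.InjOn f (Finset.range m : Set ℕ) := by
    intro s _ t _ hst
    have := congrFun hst i0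
    simp only [hf, if_pos rfl] at this
    have ha1 : 0 < (a i1).toNat := by have := hpos i1; omega
    exact Nat.eq_of_mul_eq_mul_right ha1 (by omega)
  have hsub : ↑((Finset.range m).image f) ⊆ {b : Fin n → ℕ | k = ∑ i, (b i : ℤ) * a i} := by
    intro x hx
    simp only [Finset.coe_image, Set.mem_image, Finset.mem_coe, Finset.mem_range] at hx
    obtain ⟨t, htm, rfl⟩ := hx
    exact hmem t htm
  have hcard : ((Finset.range m).image f).card = m := by
    rw [Finset.card_image_of_injOn (by simpa using hinj), Finset.card_range]
  calc m = (↑((Finset.range m).image f) : Set (Fin n → ℕ)).ncard := by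
        rw [Set.ncard_coe_finset, hcard]
  _ ≤ repCount a k := Set.ncard_le_ncard hsub (repSet_finite a hpos k)

/-- the set of multiples of `gcd(a₁, …, aₙ)` with fewer than `m`
representations is bounded above, and the set of positive such multiples is finite. -/
theorem frobSet_bddAbove_and_finite (n m : ℕ) (hn : 2 ≤ n) (hm : 0 < m)
    (a : Fin n → ℤ) (hpos : ∀ i, 0 < a i) :
    BddAbove {k : ℤ | Finset.univ.gcd a ∣ k ∧ repCount a k < m} ∧
    {k : ℤ | 0 < k ∧ Finset.univ.gcd a ∣ k ∧ repCount a k < m}.Finite := by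
  obtain ⟨N, hN⟩ := repCount_large n m hn a hpos
  constructor
  · refine ⟨N, fun k hk => ?_⟩
    simp only [Set.mem_setOf_eq] at hk
    by_contra h
    push_neg at h
    exact absurd (hN k hk.1 h.le) (by omega)
  · refine Set.Finite.subset (Set.finite_Ioo 0 N) ?_
    intro k hk
    simp only [Set.mem_setOf_eq] at hk
    refine Set.mem_Ioo.mpr ⟨hk.1, ?_⟩
    by_contra h
    push_neg at h
    exact absurd (hN k hk.2.1 h) (by omega)
end

section
/- Let n and p be positive integers, A a p × n matrix of polynomials with integer coefficients, and b a vector of p such polynomials. For each positive integer t let R(t) = {x ∈ ℝ^n : x ≥ 0 and A(t)x ≤ b(t)} and L(t) = R(t) ∩ ℤ^n, and assume R(t) is bounded for every positive integer t. Then there exists a positive integer r such that for all sufficiently large t, every x ∈ L(t) satisfies 0 ≤ x_i < t^r for every coordinate i. -/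
/-!
Order the field `ℝ(X)` of real rational functions by their sign at `+∞`; this makes it an
ordered field. Farkas' lemma holds over every ordered field (by Fourier–Motzkin elimination);
applied to `A` over `ℝ(X)` it yields either `y ≥ 0` with `yᵀA ≥ 1` or `u > 0`
with `Au ≤ 0`. In the first case, for all large `t` and `x ∈ R(t)`,
`xⱼ ≤ (yᵀA)(t)ⱼ xⱼ ≤ y(t)ᵀA(t)x ≤ y(t)ᵀb(t)`, and the rational function `yᵀb` is eventually below
`t ^ r`. In the second case `u(t)` is a recession direction of `R(t)` for all large `t`, so the
bounded polyhedron `R(t)` is empty.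
-/

/-- Evaluation of an integer polynomial at a positive integer `t`. -/
def evalAt (p : Polynomial ℤ) (t : ℕ) : ℤ := p.eval (t : ℤ)

open Filter Polynomial

theorem Finite.exists_between_of_forall_le {α ι κ : Type*} [LinearOrder α] [Nonempty α]
    [Finite ι] [Finite κ] (L : ι → α) (U : κ → α) (h : ∀ i k, L i ≤ U k) :
    ∃ a, (∀ i, L i ≤ a) ∧ ∀ k, a ≤ U k := by
  rcases isEmpty_or_nonempty ι with hι | hι
  · rcases isEmpty_or_nonempty κ with hκ | hκ
    · exact ⟨Classical.arbitrary α, isEmptyElim, isEmptyElim⟩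
    · obtain ⟨k₀, hk₀⟩ := Finite.exists_min U
      exact ⟨U k₀, isEmptyElim, hk₀⟩
  · obtain ⟨i₀, hi₀⟩ := Finite.exists_max L
    exact ⟨L i₀, hi₀, h i₀⟩

namespace Matrix

variable {F : Type*} [Field F] [LinearOrder F] {ι : Type*}

section FourierMotzkin

variable [DecidableEq ι]

abbrev FourierMotzkinIndex (c : ι → F) :=
  {q : ι × ι // 0 < c q.1 ∧ c q.2 < 0} ⊕ {z : ι // c z = 0}

/-- The nonnegative combinations of the rows of a system that cancel the column `c`: a row `i`
with `c i > 0` is paired with each row `k` with `c k < 0`, and rows with `c z = 0` are kept. -/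
def fourierMotzkin (c : ι → F) : Matrix (FourierMotzkinIndex c) ι F
  | .inl q => c q.1.1 • Pi.single q.1.2 1 - c q.1.2 • Pi.single q.1.1 1
  | .inr z => Pi.single z.1 1

theorem fourierMotzkin_nonneg [IsStrictOrderedRing F] (c : ι → F) (w : FourierMotzkinIndex c)
    (l : ι) : 0 ≤ fourierMotzkin c w l := by
  have hsingle (a : ι) : 0 ≤ Pi.single (M := fun _ => F) a 1 l := by
    rw [Pi.single_apply]
    split_ifs <;> norm_num
  rcases w with ⟨⟨i, k⟩, hi, hk⟩ | ⟨z, -⟩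
  · have h₁ := mul_nonneg hi.le (hsingle k)
    have h₂ := mul_nonpos_of_nonpos_of_nonneg hk.le (hsingle i)
    simp only [fourierMotzkin, Pi.sub_apply, Pi.smul_apply, smul_eq_mul]
    linarith
  · exact hsingle z

theorem fourierMotzkin_mulVec_inl [Fintype ι] (c v : ι → F)
    (q : {q : ι × ι // 0 < c q.1 ∧ c q.2 < 0}) :
    (fourierMotzkin c *ᵥ v) (.inl q) = c q.1.1 * v q.1.2 - c q.1.2 * v q.1.1 := by
  simp only [mulVec, fourierMotzkin, sub_dotProduct, smul_dotProduct, single_dotProduct,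
    one_mul, smul_eq_mul]

theorem fourierMotzkin_mulVec_inr [Fintype ι] (c v : ι → F) (z : {z : ι // c z = 0}) :
    (fourierMotzkin c *ᵥ v) (.inr z) = v z := by
  simp only [mulVec, fourierMotzkin, single_dotProduct, one_mul]

theorem fourierMotzkin_mulVec_self [Fintype ι] (c : ι → F) : fourierMotzkin c *ᵥ c = 0 := by
  funext w
  rcases w with q | z
  · rw [fourierMotzkin_mulVec_inl, mul_comm, sub_self, Pi.zero_apply]
  · rw [fourierMotzkin_mulVec_inr, z.2, Pi.zero_apply]

theorem exists_add_smul_le_of_fourierMotzkin_mulVec_le [IsStrictOrderedRing F] [Fintype ι]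
    {c s b : ι → F} (h : fourierMotzkin c *ᵥ s ≤ fourierMotzkin c *ᵥ b) :
    ∃ t : F, s + t • c ≤ b := by
  obtain ⟨t, hlow, hup⟩ := Finite.exists_between_of_forall_le
    (fun k : {k // c k < 0} => (b k - s k) / c k) (fun i : {i // 0 < c i} => (b i - s i) / c i)
    fun k i => by
      have hik := h (.inl ⟨(i, k), i.2, k.2⟩)
      simp only [fourierMotzkin_mulVec_inl] at hik
      rw [div_le_iff_of_neg k.2, div_mul_eq_mul_div, div_le_iff₀ i.2]
      linarith
  refine ⟨t, fun l => ?_⟩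
  rcases lt_trichotomy (c l) 0 with hl | hl | hl
  · have htl := (div_le_iff_of_neg hl).1 (hlow ⟨l, hl⟩)
    simp only [Pi.add_apply, Pi.smul_apply, smul_eq_mul]
    linarith
  · have hsb := h (.inr ⟨l, hl⟩)
    simp only [fourierMotzkin_mulVec_inr] at hsb
    simp [hl, hsb]
  · have htl := (le_div_iff₀ hl).1 (hup ⟨l, hl⟩)
    simp only [Pi.add_apply, Pi.smul_apply, smul_eq_mul]
    linarith

end FourierMotzkin

theorem mulVec_snoc {R : Type*} [CommRing R] [Fintype ι] {n : ℕ} (A : Matrix ι (Fin (n + 1)) R)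
    (x : Fin n → R) (t : R) :
    A *ᵥ Fin.snoc x t = A.submatrix id Fin.castSucc *ᵥ x + t • Aᵀ (Fin.last n) := by
  funext i
  simp [mulVec, dotProduct, Fin.sum_univ_castSucc, mul_comm]

theorem farkas_fin [IsStrictOrderedRing F] [Fintype ι] {n : ℕ} (A : Matrix ι (Fin n) F)
    (b : ι → F) : (∃ x, A *ᵥ x ≤ b) ∨ ∃ y, 0 ≤ y ∧ y ᵥ* A = 0 ∧ y ⬝ᵥ b < 0 := by
  classical
  induction n generalizing ι with
  | zero =>
    by_cases hb : 0 ≤ b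
    · exact .inl ⟨0, by rwa [mulVec_zero]⟩
    · obtain ⟨i, hi⟩ : ∃ i, b i < 0 := by simpa [Pi.le_def] using hb
      exact .inr ⟨Pi.single i 1, Pi.single_nonneg.2 zero_le_one, Subsingleton.elim _ _,
        by rwa [single_dotProduct, one_mul]⟩
  | succ n ih =>
    set c := Aᵀ (Fin.last n)
    set E := fourierMotzkin c
    rcases ih (E * A.submatrix id Fin.castSucc) (E *ᵥ b) with ⟨x, hx⟩ | ⟨y, hy, hyA, hyb⟩
    · rw [← mulVec_mulVec] at hx
      obtain ⟨t, ht⟩ := exists_add_smul_le_of_fourierMotzkin_mulVec_le hx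
      exact .inl ⟨Fin.snoc x t, by rwa [mulVec_snoc]⟩
    · refine .inr ⟨y ᵥ* E, fun l => ?_, ?_, by rwa [← dotProduct_mulVec]⟩
      · exact Finset.sum_nonneg fun w _ => mul_nonneg (hy w) (fourierMotzkin_nonneg c w l)
      · funext j
        refine Fin.lastCases ?_ (fun j => ?_) j
        · change (y ᵥ* E) ⬝ᵥ c = 0
          rw [← dotProduct_mulVec, fourierMotzkin_mulVec_self, dotProduct_zero]
        · change ((y ᵥ* E) ᵥ* A.submatrix id Fin.castSucc) j = 0
          rw [vecMul_vecMul, hyA, Pi.zero_apply]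

theorem farkas [IsStrictOrderedRing F] [Fintype ι] {κ : Type*} [Fintype κ] (A : Matrix ι κ F)
    (b : ι → F) : (∃ x, A *ᵥ x ≤ b) ∨ ∃ y, 0 ≤ y ∧ y ᵥ* A = 0 ∧ y ⬝ᵥ b < 0 := by
  set e := Fintype.equivFin κ
  rcases farkas_fin (A.submatrix id e.symm) b with ⟨x, hx⟩ | ⟨y, hy, hyA, hyb⟩
  · refine .inl ⟨x ∘ e, ?_⟩
    rwa [submatrix_mulVec_equiv, Equiv.symm_symm, Function.comp_id] at hx
  · refine .inr ⟨y, hy, funext fun k => ?_, hyb⟩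
    have h : (y ᵥ* A) (e.symm (e k)) = 0 := congrFun hyA (e k)
    rwa [Equiv.symm_apply_apply] at h

theorem exists_nonneg_one_le_vecMul_or_exists_pos_mulVec_nonpos [IsStrictOrderedRing F]
    [Fintype ι] {κ : Type*} [Fintype κ] (M : Matrix ι κ F) :
    (∃ y, 0 ≤ y ∧ 1 ≤ y ᵥ* M) ∨ ∃ u, 0 < u ∧ M *ᵥ u ≤ 0 := by
  classical
  rcases farkas (fromRows (-1 : Matrix ι ι F) (-Mᵀ)) (Sum.elim 0 (-1)) with
    ⟨y, hy⟩ | ⟨z, hz, hzA, hzb⟩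
  · simp only [fromRows_mulVec, Sum.elim_le_elim_iff, neg_mulVec, one_mulVec, mulVec_transpose,
      neg_nonpos, neg_le_neg_iff] at hy
    exact .inl ⟨y, hy⟩
  · refine .inr ⟨z ∘ Sum.inr, lt_of_le_of_ne (fun j => hz _) fun hu => ?_, ?_⟩
    · rw [← Sum.elim_comp_inl_inr z, sumElim_dotProduct_sumElim, ← hu] at hzb
      simp at hzb
    · rw [vecMul_fromRows, vecMul_neg, vecMul_neg, vecMul_one, vecMul_transpose,
        neg_add_eq_zero] at hzA
      rw [← neg_nonneg, ← hzA]
      exact fun i => hz _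

end Matrix

namespace Polynomial

variable {𝕜 : Type*} [NormedField 𝕜] [LinearOrder 𝕜] [IsStrictOrderedRing 𝕜]

theorem eventually_nonneg_or_eventually_nonpos [OrderTopology 𝕜] (P : 𝕜[X]) :
    (∀ᶠ x in atTop, 0 ≤ P.eval x) ∨ ∀ᶠ x in atTop, P.eval x ≤ 0 := by
  rcases le_total 0 P.leadingCoeff with h | h
  · refine .inl (P.isEquivalent_atTop_lead.eventually_nonneg ?_)
    filter_upwards [eventually_ge_atTop 0] with x hx
    exact mul_nonneg h (pow_nonneg hx _)
  · refine .inr (P.isEquivalent_atTop_lead.eventually_nonpos ?_)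
    filter_upwards [eventually_ge_atTop 0] with x hx
    exact mul_nonpos_of_nonpos_of_nonneg h (pow_nonneg hx _)

theorem Monic.eventually_pos [OrderTopology 𝕜] {P : 𝕜[X]} (hP : P.Monic) :
    ∀ᶠ x in atTop, 0 < P.eval x := by
  refine P.isEquivalent_atTop_lead.eventually_pos ?_
  filter_upwards [eventually_gt_atTop 0] with x hx
  rw [hP.leadingCoeff, one_mul]
  exact pow_pos hx _

theorem isUnit_germ_eval {P : 𝕜[X]} (hP : P ≠ 0) :
    IsUnit ((fun x => P.eval x : 𝕜 → 𝕜) : Germ (atTop : Filter 𝕜) 𝕜) := by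
  refine isUnit_iff_exists_inv.2 ⟨↑(fun x => (P.eval x)⁻¹), ?_⟩
  rw [← Germ.coe_mul, ← Germ.coe_one, Germ.coe_eq]
  filter_upwards [P.eventually_atTop_not_isRoot hP] with x hx
  exact mul_inv_cancel₀ hx

end Polynomial

namespace RatFunc

theorem eval_id_eq_div (f : RatFunc ℝ) (x : ℝ) :
    f.eval (.id ℝ) x = f.num.eval x / f.denom.eval x := by
  simp [eval]

/-- Nonzero polynomials have finitely many roots, so their germs at `+∞` are units, and
evaluation extends from `ℝ[X]` to its fraction field. -/
noncomputable def germAtTop : RatFunc ℝ →+* Germ (atTop : Filter ℝ) ℝ :=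
  IsLocalization.lift (M := nonZeroDivisors ℝ[X])
    (g := (Germ.coeRingHom atTop).comp (RingHom.pi Polynomial.evalRingHom))
    fun P => isUnit_germ_eval (nonZeroDivisors.ne_zero P.2)

theorem germAtTop_algebraMap (P : ℝ[X]) :
    germAtTop (algebraMap ℝ[X] (RatFunc ℝ) P) =
      ((fun x => P.eval x : ℝ → ℝ) : Germ (atTop : Filter ℝ) ℝ) :=
  IsLocalization.lift_eq _ _

theorem germAtTop_eq (f : RatFunc ℝ) :
    germAtTop f = ((fun x => f.eval (.id ℝ) x : ℝ → ℝ) : Germ (atTop : Filter ℝ) ℝ) := by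
  refine (isUnit_germ_eval f.denom_ne_zero).mul_left_injective ?_
  dsimp only
  have hf : f * algebraMap _ _ f.denom = algebraMap _ _ f.num :=
    (eq_div_iff (algebraMap_ne_zero f.denom_ne_zero)).1 f.num_div_denom.symm
  conv_lhs => rw [← germAtTop_algebraMap, ← map_mul, hf, germAtTop_algebraMap]
  rw [← Germ.coe_mul, Germ.coe_eq]
  filter_upwards [f.denom.eventually_atTop_not_isRoot f.denom_ne_zero] with x hx
  simp only [Pi.mul_apply, eval_id_eq_div, div_mul_cancel₀ _ hx]

theorem germAtTop_nonneg_or_nonpos (f : RatFunc ℝ) : 0 ≤ germAtTop f ∨ germAtTop f ≤ 0 := by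
  rw [germAtTop_eq, Germ.coe_nonneg, ← Germ.coe_zero, Germ.coe_le]
  simp only [eval_id_eq_div]
  rcases f.num.eventually_nonneg_or_eventually_nonpos with h | h
  · refine .inl ?_
    filter_upwards [h, f.monic_denom.eventually_pos] with x hn hd
    exact div_nonneg hn hd.le
  · refine .inr ?_
    filter_upwards [h, f.monic_denom.eventually_pos] with x hn hd
    exact div_nonpos_of_nonpos_of_nonneg hn hd.le

/-- `f ≤ g` iff `f x ≤ g x` for all large `x`. -/
noncomputable instance : LinearOrder (RatFunc ℝ) where
  __ := PartialOrder.lift germAtTop germAtTop.injective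
  le_total f g := by
    rcases germAtTop_nonneg_or_nonpos (g - f) with h | h
    · rw [map_sub, sub_nonneg] at h
      exact .inl h
    · rw [map_sub, sub_nonpos] at h
      exact .inr h
  toDecidableLE := Classical.decRel _

instance : IsOrderedRing (RatFunc ℝ) :=
  Function.Injective.isOrderedRing germAtTop (map_zero _) (map_one _) (map_add _) (map_mul _)
    Iff.rfl

theorem le_iff_eventually_le {f g : RatFunc ℝ} :
    f ≤ g ↔ ∀ᶠ x in atTop, f.eval (.id ℝ) x ≤ g.eval (.id ℝ) x := by
  change germAtTop f ≤ germAtTop g ↔ _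
  rw [germAtTop_eq, germAtTop_eq, Germ.coe_le]
  rfl

theorem eventually_pos_of_pos {f : RatFunc ℝ} (hf : 0 < f) :
    ∀ᶠ x in atTop, 0 < f.eval (.id ℝ) x := by
  filter_upwards [le_iff_eventually_le.1 hf.le, f.num.eventually_atTop_not_isRoot
    (num_ne_zero hf.ne'), f.monic_denom.eventually_pos] with x hx hn hd
  rw [eval_zero, eval_id_eq_div] at hx
  rw [eval_id_eq_div]
  exact hx.lt_of_ne' (div_ne_zero hn hd.ne')

theorem exists_eventually_eval_lt_pow (f : RatFunc ℝ) :
    ∃ r : ℕ, 0 < r ∧ ∀ᶠ x in atTop, f.eval (.id ℝ) x < x ^ r := by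
  refine ⟨f.num.natDegree + 1, Nat.succ_pos _, ?_⟩
  have hdeg : f.num.degree < (f.denom * Polynomial.X ^ (f.num.natDegree + 1)).degree := by
    refine degree_lt_degree ?_
    rw [f.monic_denom.natDegree_mul (monic_X_pow _), natDegree_X_pow]
    omega
  filter_upwards [(div_tendsto_atTop_zero_of_degree_lt _ _ hdeg).eventually (gt_mem_nhds one_pos),
    eventually_gt_atTop 0] with x h hx
  rw [Polynomial.eval_mul, eval_pow, Polynomial.eval_X, ← div_div, div_lt_one (pow_pos hx _)] at h
  rwa [eval_id_eq_div]

section Vectors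

open Matrix

variable {ι κ : Type*} [Fintype ι] [Fintype κ]

theorem eventually_eval_dotProduct (v w : ι → RatFunc ℝ) :
    ∀ᶠ x in atTop, (v ⬝ᵥ w).eval (.id ℝ) x = (eval (.id ℝ) x ∘ v) ⬝ᵥ (eval (.id ℝ) x ∘ w) := by
  have key : germAtTop (v ⬝ᵥ w) = Germ.coeRingHom atTop
      (∑ i, (fun x => (v i).eval (.id ℝ) x) * fun x => (w i).eval (.id ℝ) x) := by
    simp only [dotProduct, map_sum, map_mul, germAtTop_eq]
    rfl
  rw [germAtTop_eq] at key
  filter_upwards [Germ.coe_eq.1 key] with x hx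
  simpa [dotProduct] using hx

theorem eventually_comp_le_comp {v w : ι → RatFunc ℝ} (h : v ≤ w) :
    ∀ᶠ x in atTop, eval (.id ℝ) x ∘ v ≤ eval (.id ℝ) x ∘ w :=
  eventually_all.2 fun i => le_iff_eventually_le.1 (h i)

theorem eventually_eval_vecMul (y : ι → RatFunc ℝ) (M : Matrix ι κ (RatFunc ℝ)) :
    ∀ᶠ x in atTop,
      eval (.id ℝ) x ∘ (y ᵥ* M) = (eval (.id ℝ) x ∘ y) ᵥ* M.map (eval (.id ℝ) x) := by
  filter_upwards [eventually_all.2 fun j => eventually_eval_dotProduct y (Mᵀ j)] with x hx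
  exact funext hx

theorem eventually_eval_mulVec (M : Matrix ι κ (RatFunc ℝ)) (u : κ → RatFunc ℝ) :
    ∀ᶠ x in atTop,
      eval (.id ℝ) x ∘ (M *ᵥ u) = M.map (eval (.id ℝ) x) *ᵥ (eval (.id ℝ) x ∘ u) := by
  filter_upwards [eventually_all.2 fun i => eventually_eval_dotProduct (M i) u] with x hx
  exact funext hx

end Vectors

end RatFunc

theorem eq_zero_of_isBounded_of_forall_add_smul_mem {E : Type*} [NormedAddCommGroup E]
    [NormedSpace ℝ E] {S : Set E} (hS : Bornology.IsBounded S) {x u : E}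
    (h : ∀ c : ℝ, 0 ≤ c → x + c • u ∈ S) : u = 0 := by
  by_contra hu
  obtain ⟨C, hC⟩ := hS.exists_norm_le
  have hu' : 0 < ‖u‖ := norm_pos_iff.2 hu
  set c := (|C| + ‖x‖ + 1) / ‖u‖
  have hc : ‖c • u‖ = |C| + ‖x‖ + 1 := by
    rw [norm_smul, Real.norm_of_nonneg (by positivity), div_mul_cancel₀ _ hu'.ne']
  have hfar := hC _ (h c (by positivity))
  have htri := norm_sub_le (x + c • u) x
  rw [add_sub_cancel_left] at htri
  linarith [le_abs_self C]

namespace Matrix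

def polyhedron {R ι κ : Type*} [Semiring R] [PartialOrder R] [Fintype κ] (M : Matrix ι κ R)
    (b : ι → R) : Set (κ → R) :=
  {x | 0 ≤ x ∧ M *ᵥ x ≤ b}

theorem le_dotProduct_of_mem_polyhedron {R ι κ : Type*} [CommSemiring R] [PartialOrder R]
    [IsOrderedRing R] [Fintype ι] [Fintype κ] {M : Matrix ι κ R} {b : ι → R} {x : κ → R}
    (hx : x ∈ M.polyhedron b) {y : ι → R} (hy : 0 ≤ y) (hyM : 1 ≤ y ᵥ* M) (j : κ) :
    x j ≤ y ⬝ᵥ b :=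
  calc x j = 1 * x j := (one_mul _).symm
    _ ≤ (y ᵥ* M) j * x j := mul_le_mul_of_nonneg_right (hyM j) (hx.1 j)
    _ ≤ (y ᵥ* M) ⬝ᵥ x := Finset.single_le_sum
        (fun k _ => mul_nonneg (zero_le_one.trans (hyM k)) (hx.1 k)) (Finset.mem_univ j)
    _ = y ⬝ᵥ (M *ᵥ x) := (dotProduct_mulVec y M x).symm
    _ ≤ y ⬝ᵥ b := dotProduct_le_dotProduct_of_nonneg_left hx.2 hy

theorem eq_zero_of_isBounded_polyhedron {ι κ : Type*} [Fintype κ] {M : Matrix ι κ ℝ}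
    {b : ι → ℝ} (hbdd : Bornology.IsBounded (M.polyhedron b)) {x : κ → ℝ}
    (hx : x ∈ M.polyhedron b) {u : κ → ℝ} (hu : 0 ≤ u) (hMu : M *ᵥ u ≤ 0) : u = 0 := by
  refine eq_zero_of_isBounded_of_forall_add_smul_mem hbdd (x := x) fun c hc => ⟨?_, ?_⟩
  · exact add_nonneg hx.1 (smul_nonneg hc hu)
  · rw [mulVec_add, mulVec_smul]
    calc M *ᵥ x + c • M *ᵥ u ≤ b + c • 0 :=
          add_le_add hx.2 (smul_le_smul_of_nonneg_left hMu hc)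
      _ = b := by rw [smul_zero, add_zero]

open RatFunc

def polyhedronAt {ι κ : Type*} [Fintype κ] (M : Matrix ι κ (RatFunc ℝ)) (b : ι → RatFunc ℝ)
    (s : ℝ) : Set (κ → ℝ) :=
  (M.map (eval (.id ℝ) s)).polyhedron (eval (.id ℝ) s ∘ b)

variable {ι κ : Type*} [Fintype ι] [Fintype κ] (M : Matrix ι κ (RatFunc ℝ)) (b : ι → RatFunc ℝ)

theorem exists_eventually_lt_pow_of_one_le_vecMul {y : ι → RatFunc ℝ} (hy : 0 ≤ y)
    (hyM : 1 ≤ y ᵥ* M) :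
    ∃ r : ℕ, 0 < r ∧ ∀ᶠ s in atTop, ∀ x ∈ M.polyhedronAt b s, ∀ j, x j < s ^ r := by
  obtain ⟨r, hr, hlt⟩ := exists_eventually_eval_lt_pow (y ⬝ᵥ b)
  refine ⟨r, hr, ?_⟩
  filter_upwards [eventually_comp_le_comp hy, eventually_comp_le_comp hyM,
    eventually_eval_vecMul y M, eventually_eval_dotProduct y b, hlt]
    with s hy hyM hyMs hyb hlt x hx j
  rw [hyMs] at hyM
  calc x j ≤ (eval (.id ℝ) s ∘ y) ⬝ᵥ (eval (.id ℝ) s ∘ b) :=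
        le_dotProduct_of_mem_polyhedron hx (by simpa using hy) (by simpa using hyM) j
    _ = (y ⬝ᵥ b).eval (.id ℝ) s := hyb.symm
    _ < s ^ r := hlt

theorem eventually_polyhedronAt_eq_empty {u : κ → RatFunc ℝ} (hu : 0 < u) (hMu : M *ᵥ u ≤ 0)
    {l : Filter ℝ} (hl : l ≤ atTop)
    (hbdd : ∀ᶠ s in l, Bornology.IsBounded (M.polyhedronAt b s)) :
    ∀ᶠ s in l, M.polyhedronAt b s = ∅ := by
  obtain ⟨hu, j, hj⟩ := Pi.lt_def.1 hu
  filter_upwards [hbdd, hl (eventually_comp_le_comp hu), hl (eventually_pos_of_pos hj),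
    hl (eventually_comp_le_comp hMu), hl (eventually_eval_mulVec M u)]
    with s hs hu hj hMu hMus
  refine Set.eq_empty_of_forall_notMem fun x hx => hj.ne' ?_
  rw [hMus] at hMu
  exact congrFun (eq_zero_of_isBounded_polyhedron hs hx (by simpa using hu) (by simpa using hMu)) j

theorem exists_eventually_lt_pow_of_isBounded_polyhedronAt {l : Filter ℝ} (hl : l ≤ atTop)
    (hbdd : ∀ᶠ s in l, Bornology.IsBounded (M.polyhedronAt b s)) :
    ∃ r : ℕ, 0 < r ∧ ∀ᶠ s in l, ∀ x ∈ M.polyhedronAt b s, ∀ j, x j < s ^ r := by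
  rcases exists_nonneg_one_le_vecMul_or_exists_pos_mulVec_nonpos M with
    ⟨y, hy, hyM⟩ | ⟨u, hu, hMu⟩
  · obtain ⟨r, hr, h⟩ := exists_eventually_lt_pow_of_one_le_vecMul M b hy hyM
    exact ⟨r, hr, hl h⟩
  · refine ⟨1, one_pos, ?_⟩
    filter_upwards [eventually_polyhedronAt_eq_empty M b hu hMu hl hbdd] with s hs x hx
    simp [hs] at hx

end Matrix

theorem lattice_points_polynomially_bounded_general (n p : ℕ)
    (A : Matrix (Fin p) (Fin n) (Polynomial ℤ)) (b : Fin p → Polynomial ℤ)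
    (hbdd : ∀ t : ℕ, 0 < t → Bornology.IsBounded
      {x : Fin n → ℝ | (∀ j, 0 ≤ x j) ∧
        ∀ i, ∑ j, (evalAt (A i j) t : ℝ) * x j ≤ (evalAt (b i) t : ℝ)}) :
    ∃ r : ℕ, 0 < r ∧ ∃ N : ℕ, ∀ t : ℕ, N ≤ t →
      ∀ x : Fin n → ℤ,
        ((∀ j, 0 ≤ x j) ∧ ∀ i, ∑ j, evalAt (A i j) t * x j ≤ evalAt (b i) t) →
        ∀ j, 0 ≤ x j ∧ x j < (t : ℤ) ^ r := by
  set φ : ℤ[X] →+* RatFunc ℝ :=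
    (algebraMap ℝ[X] (RatFunc ℝ)).comp (mapRingHom (Int.castRingHom ℝ))
  have hφ (P : ℤ[X]) (t : ℕ) : (φ P).eval (.id ℝ) (t : ℝ) = evalAt P t := by
    simp [φ, evalAt, RatFunc.eval_algebraMap]
  have hR (t : ℕ) : (A.map φ).polyhedronAt (φ ∘ b) t = {x | (∀ j, 0 ≤ x j) ∧
      ∀ i, ∑ j, (evalAt (A i j) t : ℝ) * x j ≤ (evalAt (b i) t : ℝ)} := by
    simp only [Matrix.polyhedronAt, Matrix.map_map, Function.comp_def, hφ]
    rfl
  obtain ⟨r, hr, hlt⟩ := (A.map φ).exists_eventually_lt_pow_of_isBounded_polyhedronAt (φ ∘ b)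
    tendsto_natCast_atTop_atTop
    (eventually_map.2 ((eventually_gt_atTop 0).mono fun t ht => (hR t).symm ▸ hbdd t ht))
  obtain ⟨N, hN⟩ := eventually_atTop.1 (eventually_map.1 hlt)
  refine ⟨r, hr, N, fun t ht x hx j => ⟨hx.1 j, ?_⟩⟩
  have hxR : (fun j => (x j : ℝ)) ∈ (A.map φ).polyhedronAt (φ ∘ b) t := by
    rw [hR]
    exact ⟨fun j => by dsimp only; exact_mod_cast hx.1 j,
      fun i => by dsimp only; exact_mod_cast hx.2 i⟩
  exact_mod_cast hN t ht _ hxR j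

/-- if the parametric polyhedron `{x ≥ 0 : A(t) x ≤ b(t)}` is bounded
for every `t > 0`, then there is a positive integer `r` such that for all sufficiently
large `t`, every lattice point `x` of the polyhedron satisfies `0 ≤ xᵢ < t^r`. -/
theorem lattice_points_polynomially_bounded (n p : ℕ) (hn : 0 < n) (hp : 0 < p)
    (A : Matrix (Fin p) (Fin n) (Polynomial ℤ)) (b : Fin p → Polynomial ℤ)
    (hbdd : ∀ t : ℕ, 0 < t → Bornology.IsBounded
      {x : Fin n → ℝ | (∀ j, 0 ≤ x j) ∧
        ∀ i, ∑ j, (evalAt (A i j) t : ℝ) * x j ≤ (evalAt (b i) t : ℝ)}) :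
    ∃ r : ℕ, 0 < r ∧ ∃ N : ℕ, ∀ t : ℕ, N ≤ t →
      ∀ x : Fin n → ℤ,
        ((∀ j, 0 ≤ x j) ∧ ∀ i, ∑ j, evalAt (A i j) t * x j ≤ evalAt (b i) t) →
        ∀ j, 0 ≤ x j ∧ x j < (t : ℤ) ^ r :=
  lattice_points_polynomially_bounded_general n p A b hbdd
end

section
/- Let m, n_1, n_2, p_1, p_2 be positive integers and set n = n_1 + n_2. Let A_1 be a p_1 × n matrix of polynomials with integer coefficients, A_2 a p_2 × n_2 matrix of such polynomials, b_1 and b_2 vectors of p_1 and p_2 such polynomials, and c a vector of n_2 such polynomials. For each positive integer t let L_1(t) = {x ∈ ℤ^n : x ≥ 0, A_1(t)x = b_1(t)}, L_2(t) = {x₂ ∈ ℤ^{n_2} : x₂ ≥ 0, A_2(t)x₂ ≤ b_2(t)}, and L_3(t) = {x₂ ∈ L_2(t) : the number of x₃ ∈ ℤ^{n_1} with (x₂, x₃) ∈ L_1(t) is less than m}. Let r and N be positive integers such that for all t > N, every x ∈ L_1(t) and every x₂ ∈ L_2(t) have all coordinates in [0, t^r). Define the base-t digit maps φ_{1,t}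 : ℤ^{rn} → ℤ^n and φ_{2,t} : ℤ^{r n_2} → ℤ^{n_2} by sending each block of r digits (y_{i,1}, …, y_{i,r}) to Σ_{j=1}^r y_{i,j} t^{j−1}. Let L'_1(t) = {y ∈ {0,…,t−1}^{rn} : A_1(t) φ_{1,t}(y) = b_1(t)}, L'_2(t) = {y₂ ∈ {0,…,t−1}^{r n_2} : A_2(t) φ_{2,t}(y₂) ≤ b_2(t)}, and L'_3(t) = {y₂ ∈ L'_2(t) : the number of y₃ ∈ ℤ^{r n_1} with (y₂, y₃) ∈ L'_1(t) is less than m}. Then for all t > N, φ_{2,t} restricts to a bijection from L'_3(t) onto L_3(t), and for every y₂ ∈ L'_3(t) one has c(t)·φ_{2,t}(y₂) = Σ_{i=1}^{n_2} c_i(t) Σ_{j=1}^r y_{i,j} t^{j−1} (the bijection commutes with evaluating the respective objective functions). -/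
/-- The base-`t` digit map: it sends the block of digits `(y i 0, …, y i (r-1))`
to the integer `∑ j, y i j * t^j`. -/
def digitMap {ι : Type*} (r t : ℕ) (y : ι → Fin r → ℤ) : ι → ℤ :=
  fun i => ∑ j : Fin r, y i j * (t : ℤ) ^ (j : ℕ)

/-- `L₁(t) = {x ∈ ℤ^{n₁+n₂} : x ≥ 0, A₁(t) x = b₁(t)}`; coordinates are indexed by
`Fin n₂ ⊕ Fin n₁`, with the `Fin n₂` block the first `n₂` coordinates. -/
def latticeL1 {n1 n2 p1 : ℕ} (A1 : Matrix (Fin p1) (Fin n2 ⊕ Fin n1) (Polynomial ℤ))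
    (b1 : Fin p1 → Polynomial ℤ) (t : ℕ) : Set ((Fin n2 ⊕ Fin n1) → ℤ) :=
  {x | (∀ j, 0 ≤ x j) ∧ ∀ i, ∑ j, evalAt (A1 i j) t * x j = evalAt (b1 i) t}

/-- `L₂(t) = {x₂ ∈ ℤ^{n₂} : x₂ ≥ 0, A₂(t) x₂ ≤ b₂(t)}`. -/
def latticeL2 {n2 p2 : ℕ} (A2 : Matrix (Fin p2) (Fin n2) (Polynomial ℤ))
    (b2 : Fin p2 → Polynomial ℤ) (t : ℕ) : Set (Fin n2 → ℤ) :=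
  {x | (∀ j, 0 ≤ x j) ∧ ∀ i, ∑ j, evalAt (A2 i j) t * x j ≤ evalAt (b2 i) t}

/-- `L₃(t)`: points of `L₂(t)` which are the projection of fewer than `m` points
of `L₁(t)`. -/
noncomputable def latticeL3 {n1 n2 p1 p2 : ℕ} (m : ℕ)
    (A1 : Matrix (Fin p1) (Fin n2 ⊕ Fin n1) (Polynomial ℤ)) (b1 : Fin p1 → Polynomial ℤ)
    (A2 : Matrix (Fin p2) (Fin n2) (Polynomial ℤ)) (b2 : Fin p2 → Polynomial ℤ)
    (t : ℕ) : Set (Fin n2 → ℤ) :=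
  {x2 ∈ latticeL2 A2 b2 t |
    {x3 : Fin n1 → ℤ | Sum.elim x2 x3 ∈ latticeL1 A1 b1 t}.ncard < m}

/-- `L₁'(t)`: digit vectors in `{0,…,t−1}^{r(n₁+n₂)}` with `A₁(t) φ_{1,t}(y) = b₁(t)`. -/
def latticeL1' {n1 n2 p1 : ℕ} (A1 : Matrix (Fin p1) (Fin n2 ⊕ Fin n1) (Polynomial ℤ))
    (b1 : Fin p1 → Polynomial ℤ) (r t : ℕ) : Set ((Fin n2 ⊕ Fin n1) → Fin r → ℤ) :=
  {y | (∀ k j, 0 ≤ y k j ∧ y k j ≤ (t : ℤ) - 1) ∧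
    ∀ i, ∑ k, evalAt (A1 i k) t * digitMap r t y k = evalAt (b1 i) t}

/-- `L₂'(t)`: digit vectors in `{0,…,t−1}^{r n₂}` with `A₂(t) φ_{2,t}(y₂) ≤ b₂(t)`. -/
def latticeL2' {n2 p2 : ℕ} (A2 : Matrix (Fin p2) (Fin n2) (Polynomial ℤ))
    (b2 : Fin p2 → Polynomial ℤ) (r t : ℕ) : Set (Fin n2 → Fin r → ℤ) :=
  {y | (∀ k j, 0 ≤ y k j ∧ y k j ≤ (t : ℤ) - 1) ∧
    ∀ i, ∑ k, evalAt (A2 i k) t * digitMap r t y k ≤ evalAt (b2 i) t}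

/-- `L₃'(t)`: digit vectors of `L₂'(t)` which are the projection of fewer than `m`
digit vectors of `L₁'(t)`. -/
noncomputable def latticeL3' {n1 n2 p1 p2 : ℕ} (m : ℕ)
    (A1 : Matrix (Fin p1) (Fin n2 ⊕ Fin n1) (Polynomial ℤ)) (b1 : Fin p1 → Polynomial ℤ)
    (A2 : Matrix (Fin p2) (Fin n2) (Polynomial ℤ)) (b2 : Fin p2 → Polynomial ℤ)
    (r t : ℕ) : Set (Fin n2 → Fin r → ℤ) :=
  {y2 ∈ latticeL2' A2 b2 r t |
    {y3 : Fin n1 → Fin r → ℤ | Sum.elim y2 y3 ∈ latticeL1' A1 b1 r t}.ncard < m}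

/-- Existence of base-`t` digit expansions. -/
private lemma digitSum_exists (t : ℕ) (ht : 1 ≤ t) :
    ∀ r (x : ℤ), 0 ≤ x → x < (t : ℤ) ^ r →
      ∃ d : Fin r → ℤ, (∀ j, 0 ≤ d j ∧ d j ≤ (t : ℤ) - 1) ∧
        ∑ j : Fin r, d j * (t : ℤ) ^ (j : ℕ) = x := by
  intro r
  induction r with
  | zero =>
      intro x h0 h1
      refine ⟨fun _ => 0, fun j => j.elim0, ?_⟩
      simp only [pow_zero] at h1
      simp only [Finset.univ_eq_empty, Finset.sum_empty]
      omega
  | succ r ih =>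
      intro x h0 h1
      have ht' : (0 : ℤ) < t := by exact_mod_cast ht
      obtain ⟨d', hd', hsum⟩ := ih (x / t) (Int.ediv_nonneg h0 (le_of_lt ht'))
        (by
          rw [Int.ediv_lt_iff_lt_mul ht']
          calc x < (t : ℤ) ^ (r + 1) := h1
          _ = (t : ℤ) ^ r * t := by ring)
      refine ⟨Fin.cons (x % t) d', ?_, ?_⟩
      · intro j
        refine Fin.cases ?_ ?_ j
        · simp only [Fin.cons_zero]
          have h2 := Int.emod_nonneg x (by omega : (t : ℤ) ≠ 0)
          have h3 := Int.emod_lt_of_pos x ht'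
          omega
        · intro i; simpa using hd' i
      · rw [Fin.sum_univ_succ]
        simp only [Fin.cons_zero, Fin.cons_succ, Fin.val_succ, Fin.val_zero, pow_zero, mul_one]
        have hmul : ∑ j : Fin r, d' j * (t : ℤ) ^ ((j : ℕ) + 1)
            = (∑ j : Fin r, d' j * (t : ℤ) ^ (j : ℕ)) * t := by
          rw [Finset.sum_mul]
          exact Finset.sum_congr rfl fun j _ => by ring
        rw [hmul, hsum, mul_comm]
        exact Int.emod_add_mul_ediv x t

/-- Uniqueness of base-`t` digit expansions. -/
private lemma digitSum_unique (t : ℕ) (ht : 1 ≤ t) :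
    ∀ r (d e : Fin r → ℤ), (∀ j, 0 ≤ d j ∧ d j ≤ (t : ℤ) - 1) →
      (∀ j, 0 ≤ e j ∧ e j ≤ (t : ℤ) - 1) →
      ∑ j : Fin r, d j * (t : ℤ) ^ (j : ℕ) = ∑ j : Fin r, e j * (t : ℤ) ^ (j : ℕ) →
      d = e := by
  intro r
  induction r with
  | zero => intro d e _ _ _; funext j; exact j.elim0
  | succ r ih =>
      intro d e hd he hsum
      have expand : ∀ f : Fin (r + 1) → ℤ,
          ∑ j : Fin (r + 1), f j * (t : ℤ) ^ (j : ℕ)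
            = f 0 + (t : ℤ) * ∑ j : Fin r, f j.succ * (t : ℤ) ^ (j : ℕ) := by
        intro f
        rw [Fin.sum_univ_succ, Finset.mul_sum]
        simp only [Fin.val_zero, pow_zero, mul_one, Fin.val_succ]
        congr 1
        exact Finset.sum_congr rfl fun j _ => by ring
      rw [expand, expand] at hsum
      set S := ∑ j : Fin r, d j.succ * (t : ℤ) ^ (j : ℕ) with hS
      set T := ∑ j : Fin r, e j.succ * (t : ℤ) ^ (j : ℕ) with hT
      have ht' : (1 : ℤ) ≤ (t : ℤ) := by exact_mod_cast ht
      have hdvd : (t : ℤ) ∣ (d 0 - e 0) := ⟨T - S, by linarith [hsum]⟩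
      have habs : |d 0 - e 0| < (t : ℤ) := by
        have h1 := hd 0; have h2 := he 0
        rw [abs_lt]; omega
      have h0 : d 0 = e 0 := by
        have := Int.eq_zero_of_abs_lt_dvd hdvd habs
        omega
      have hST : S = T := by
        rw [h0] at hsum
        have h : (t : ℤ) * S = (t : ℤ) * T := by linarith
        exact mul_left_cancel₀ (by omega) h
      have htail : (fun j : Fin r => d j.succ) = (fun j : Fin r => e j.succ) :=
        ih _ _ (fun j => hd j.succ) (fun j => he j.succ) hST
      funext j
      exact Fin.cases h0 (fun i => congrFun htail i) j

private lemma digitMap_nonneg {ι : Type*} (r t : ℕ) {y : ι → Fin r → ℤ}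
    (hy : ∀ k j, 0 ≤ y k j) (k : ι) : 0 ≤ digitMap r t y k :=
  Finset.sum_nonneg fun j _ => mul_nonneg (hy k j) (pow_nonneg (by positivity) _)

private lemma digitMap_inj {ι : Type*} (r t : ℕ) (ht : 1 ≤ t)
    {y y' : ι → Fin r → ℤ} (hy : ∀ k j, 0 ≤ y k j ∧ y k j ≤ (t : ℤ) - 1)
    (hy' : ∀ k j, 0 ≤ y' k j ∧ y' k j ≤ (t : ℤ) - 1)
    (h : digitMap r t y = digitMap r t y') : y = y' := by
  funext k
  exact digitSum_unique t ht r (y k) (y' k) (hy k) (hy' k) (congrFun h k)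

private lemma digitMap_surj {ι : Type*} (r t : ℕ) (ht : 1 ≤ t)
    (x : ι → ℤ) (hx : ∀ k, 0 ≤ x k ∧ x k < (t : ℤ) ^ r) :
    ∃ y : ι → Fin r → ℤ, (∀ k j, 0 ≤ y k j ∧ y k j ≤ (t : ℤ) - 1) ∧ digitMap r t y = x := by
  choose y hy1 hy2 using fun k => digitSum_exists t ht r (x k) (hx k).1 (hx k).2
  exact ⟨y, hy1, funext hy2⟩

private lemma digitMap_sumElim {α β : Type*} (r t : ℕ) (y2 : α → Fin r → ℤ)
    (y3 : β → Fin r → ℤ) :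
    digitMap r t (Sum.elim y2 y3) = Sum.elim (digitMap r t y2) (digitMap r t y3) := by
  funext k; cases k <;> rfl

/-- The key fiber bijection over a fixed `y₂`. -/
private lemma L1_fiber_bij {n1 n2 p1 : ℕ}
    (A1 : Matrix (Fin p1) (Fin n2 ⊕ Fin n1) (Polynomial ℤ)) (b1 : Fin p1 → Polynomial ℤ)
    (r t : ℕ) (ht : 1 ≤ t)
    (hbound : ∀ x ∈ latticeL1 A1 b1 t, ∀ j, 0 ≤ x j ∧ x j < (t : ℤ) ^ r)
    (y2 : Fin n2 → Fin r → ℤ) (hy2 : ∀ k j, 0 ≤ y2 k j ∧ y2 k j ≤ (t : ℤ) - 1) :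
    Set.BijOn (digitMap r t)
      {y3 : Fin n1 → Fin r → ℤ | Sum.elim y2 y3 ∈ latticeL1' A1 b1 r t}
      {x3 : Fin n1 → ℤ | Sum.elim (digitMap r t y2) x3 ∈ latticeL1 A1 b1 t} := by
  constructor
  · -- MapsTo
    intro y3 hy3
    obtain ⟨hbnd, heq⟩ := hy3
    simp only [Set.mem_setOf_eq]
    rw [← digitMap_sumElim]
    refine ⟨fun k => digitMap_nonneg r t (fun k j => (hbnd k j).1) k, heq⟩
  constructor
  · -- InjOn
    intro y3 hy3 y3' hy3' h
    have hb : ∀ k j, 0 ≤ y3 k j ∧ y3 k j ≤ (t : ℤ) - 1 := fun k j => hy3.1 (Sum.inr k) j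
    have hb' : ∀ k j, 0 ≤ y3' k j ∧ y3' k j ≤ (t : ℤ) - 1 := fun k j => hy3'.1 (Sum.inr k) j
    exact digitMap_inj r t ht hb hb' h
  · -- SurjOn
    intro x3 hx3
    simp only [Set.mem_setOf_eq] at hx3
    have hb := hbound _ hx3
    obtain ⟨y3, hy3b, hy3e⟩ := digitMap_surj r t ht x3 (fun k => hb (Sum.inr k))
    refine ⟨y3, ?_, hy3e⟩
    simp only [Set.mem_setOf_eq]
    refine ⟨fun k j => by cases k with
      | inl i => exact hy2 i j
      | inr i => exact hy3b i j, ?_⟩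
    have key : digitMap r t (Sum.elim y2 y3) = Sum.elim (digitMap r t y2) x3 := by
      rw [digitMap_sumElim, hy3e]
    intro i
    rw [key]
    exact hx3.2 i

/-- for `t > N`, the base-`t` digit map `φ_{2,t}` is a bijection from
`L₃'(t)` onto `L₃(t)` commuting with the respective objective functions. -/
theorem digit_map_L3_bijOn (m n1 n2 p1 p2 : ℕ)
    (hm : 0 < m) (hn1 : 0 < n1) (hn2 : 0 < n2) (hp1 : 0 < p1) (hp2 : 0 < p2)
    (A1 : Matrix (Fin p1) (Fin n2 ⊕ Fin n1) (Polynomial ℤ)) (b1 : Fin p1 → Polynomial ℤ)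
    (A2 : Matrix (Fin p2) (Fin n2) (Polynomial ℤ)) (b2 : Fin p2 → Polynomial ℤ)
    (c : Fin n2 → Polynomial ℤ)
    (r N : ℕ) (hr : 0 < r) (hN : 0 < N)
    (hbound1 : ∀ t : ℕ, N < t → ∀ x ∈ latticeL1 A1 b1 t, ∀ j, 0 ≤ x j ∧ x j < (t : ℤ) ^ r)
    (hbound2 : ∀ t : ℕ, N < t → ∀ x2 ∈ latticeL2 A2 b2 t, ∀ j, 0 ≤ x2 j ∧ x2 j < (t : ℤ) ^ r) :
    ∀ t : ℕ, N < t →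
      Set.BijOn (digitMap r t) (latticeL3' m A1 b1 A2 b2 r t) (latticeL3 m A1 b1 A2 b2 t) ∧
      ∀ y2 ∈ latticeL3' m A1 b1 A2 b2 r t,
        ∑ i, evalAt (c i) t * digitMap r t y2 i =
          ∑ i : Fin n2, evalAt (c i) t * ∑ j : Fin r, y2 i j * (t : ℤ) ^ (j : ℕ) := by
  intro t htN
  have ht : 1 ≤ t := by omega
  have hcard : ∀ y2 : Fin n2 → Fin r → ℤ, (∀ k j, 0 ≤ y2 k j ∧ y2 k j ≤ (t : ℤ) - 1) →
      {x3 : Fin n1 → ℤ | Sum.elim (digitMap r t y2) x3 ∈ latticeL1 A1 b1 t}.ncard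
        = {y3 : Fin n1 → Fin r → ℤ | Sum.elim y2 y3 ∈ latticeL1' A1 b1 r t}.ncard := by
    intro y2 hy2
    have h := L1_fiber_bij A1 b1 r t ht (hbound1 t htN) y2 hy2
    rw [← h.image_eq]
    exact Set.ncard_image_of_injOn h.injOn
  refine ⟨⟨?_, ?_, ?_⟩, fun y2 _ => rfl⟩
  · -- MapsTo
    intro y2 hy2
    obtain ⟨⟨hb, hineq⟩, hcnt⟩ := hy2
    refine ⟨⟨fun k => digitMap_nonneg r t (fun k j => (hb k j).1) k, hineq⟩, ?_⟩
    rw [hcard y2 hb]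
    exact hcnt
  · -- InjOn
    intro y2 hy2 y2' hy2' h
    exact digitMap_inj r t ht (fun k j => hy2.1.1 k j) (fun k j => hy2'.1.1 k j) h
  · -- SurjOn
    intro x2 hx2
    obtain ⟨hx2L2, hcnt⟩ := hx2
    obtain ⟨y2, hy2b, hy2e⟩ := digitMap_surj r t ht x2 (hbound2 t htN x2 hx2L2)
    refine ⟨y2, ⟨⟨hy2b, ?_⟩, ?_⟩, hy2e⟩
    · intro i
      rw [hy2e]
      exact hx2L2.2 i
    · have h := hcard y2 hy2b
      rw [hy2e] at h
      rw [← h]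
      exact hcnt
end

section
/- Let m and ℓ be positive integers and let f_1, …, f_m be eventually quasi-polynomial functions with values in ℤ ∪ {−∞}. For each sufficiently large positive integer t, let f(t) be the ℓ-th largest value among the multiset {f_1(t), …, f_m(t)} (which is −∞ if ℓ > m, and where −∞ is smaller than every integer). Then f is eventually quasi-polynomial. -/
open Polynomial Filter

/-- Eventual quasi-polynomiality for functions with values in `ℤ ∪ {−∞}`:
on each residue class mod the period, the function eventually agrees with a
rational polynomial or is eventually `−∞`. -/
def IsEQPBot (f : ℕ → WithBot ℤ) : Prop :=
  ∃ d : ℕ, 0 < d ∧ ∀ r : ℕ, r < d →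
    (∃ R : Polynomial ℚ, ∃ N : ℕ, ∀ t : ℕ, N ≤ t → t % d = r →
      ∃ z : ℤ, f t = (z : WithBot ℤ) ∧ (z : ℚ) = R.eval (t : ℚ)) ∨
    (∃ N : ℕ, ∀ t : ℕ, N ≤ t → t % d = r → f t = ⊥)

lemma eventually_pos_nat (D : Polynomial ℚ) (hdeg : 0 < D.degree) (hlc : 0 < D.leadingCoeff) :
    ∃ M : ℕ, ∀ t : ℕ, M ≤ t → 0 < D.eval (t : ℚ) := by
  have h1 : Tendsto (fun x : ℚ => D.eval x) atTop atTop :=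
    D.tendsto_atTop_of_leadingCoeff_nonneg hdeg hlc.le
  have h2 : Tendsto (fun t : ℕ => D.eval (t : ℚ)) atTop atTop :=
    h1.comp tendsto_natCast_atTop_atTop
  have h3 := h2.eventually_gt_atTop 0
  rw [eventually_atTop] at h3
  obtain ⟨M, hM⟩ := h3
  exact ⟨M, hM⟩

lemma poly_trichotomy (D : Polynomial ℚ) :
    ∃ M : ℕ, (∀ t : ℕ, M ≤ t → 0 < D.eval (t : ℚ)) ∨
      (∀ t : ℕ, M ≤ t → D.eval (t : ℚ) = 0) ∨
      (∀ t : ℕ, M ≤ t → D.eval (t : ℚ) < 0) := by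
  by_cases h0 : D = 0
  · exact ⟨0, Or.inr (Or.inl (by simp [h0]))⟩
  by_cases hdeg : 0 < D.degree
  · rcases lt_trichotomy D.leadingCoeff 0 with hlc | hlc | hlc
    · obtain ⟨M, hM⟩ := eventually_pos_nat (-D) (by simpa using hdeg)
        (by rw [leadingCoeff_neg]; linarith)
      refine ⟨M, Or.inr (Or.inr fun t ht => ?_)⟩
      have := hM t ht
      rw [eval_neg] at this
      linarith
    · exact absurd hlc (Polynomial.leadingCoeff_ne_zero.mpr h0)
    · obtain ⟨M, hM⟩ := eventually_pos_nat D hdeg hlc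
      exact ⟨M, Or.inl hM⟩
  · have hD : D = C (D.coeff 0) := Polynomial.eq_C_of_degree_le_zero (le_of_not_gt hdeg)
    have hc : D.coeff 0 ≠ 0 := by
      intro h
      apply h0
      rw [hD, h, map_zero]
    rcases lt_trichotomy (D.coeff 0) 0 with h | h | h
    · exact ⟨0, Or.inr (Or.inr fun t _ => by rw [hD, eval_C]; exact h)⟩
    · exact absurd h hc
    · exact ⟨0, Or.inl fun t _ => by rw [hD, eval_C]; exact h⟩

lemma sign_stable (D : Polynomial ℚ) :
    ∃ M : ℕ, ∀ s t : ℕ, M ≤ s → M ≤ t →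
      ((0 < D.eval (s : ℚ)) ↔ (0 < D.eval (t : ℚ))) ∧
      ((0 ≤ D.eval (s : ℚ)) ↔ (0 ≤ D.eval (t : ℚ))) := by
  obtain ⟨M, h⟩ := poly_trichotomy D
  refine ⟨M, fun s t hs ht => ?_⟩
  rcases h with h | h | h
  · have h1 := h s hs; have h2 := h t ht
    exact ⟨⟨fun _ => h2, fun _ => h1⟩, ⟨fun _ => h2.le, fun _ => h1.le⟩⟩
  · have h1 := h s hs; have h2 := h t ht
    constructor <;> constructor <;> intro hx <;> first
      | (exfalso; rw [h1] at hx; exact lt_irrefl _ hx)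
      | (exfalso; rw [h2] at hx; exact lt_irrefl _ hx)
      | (rw [h1]) | (rw [h2])
  · have h1 := h s hs; have h2 := h t ht
    constructor <;> constructor <;> intro hx <;> linarith

lemma exists_kth {α : Type*} [DecidableEq α] (z : α → ℚ) :
    ∀ ℓ : ℕ, 1 ≤ ℓ → ∀ S : Finset α, ℓ ≤ S.card →
      ∃ i₀ ∈ S, (S.filter fun i => z i₀ < z i).card < ℓ ∧
        ℓ ≤ (S.filter fun i => z i₀ ≤ z i).card := by
  intro ℓ
  induction ℓ with
  | zero => omega
  | succ n ih =>
    intro _ S hcard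
    have hne : S.Nonempty := Finset.card_pos.mp (by omega)
    obtain ⟨b, hbS, hb⟩ := S.exists_max_image z hne
    rcases Nat.eq_zero_or_pos n with hn | hn
    · subst hn
      refine ⟨b, hbS, ?_, ?_⟩
      · have he : S.filter (fun i => z b < z i) = ∅ := by
          rw [Finset.filter_eq_empty_iff]
          intro i hi
          exact not_lt.mpr (hb i hi)
        simp [he]
      · have hbm : b ∈ S.filter fun i => z b ≤ z i :=
          Finset.mem_filter.mpr ⟨hbS, le_refl _⟩
        have := Finset.card_pos.mpr ⟨b, hbm⟩
        omega
    · set S' := S.erase b with hS'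
      have hcard' : S'.card = S.card - 1 := Finset.card_erase_of_mem hbS
      obtain ⟨i₀, hi₀S', h3, h4⟩ := ih hn S' (by omega)
      have hi₀S : i₀ ∈ S := Finset.mem_of_mem_erase hi₀S'
      refine ⟨i₀, hi₀S, ?_, ?_⟩
      · have hsub : S.filter (fun i => z i₀ < z i) ⊆
            insert b (S'.filter fun i => z i₀ < z i) := by
          intro x hx
          rw [Finset.mem_filter] at hx
          by_cases hxb : x = b
          · exact hxb ▸ Finset.mem_insert_self _ _
          · exact Finset.mem_insert_of_mem
              (Finset.mem_filter.mpr ⟨Finset.mem_erase.mpr ⟨hxb, hx.1⟩, hx.2⟩)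
        have h5 := Finset.card_le_card hsub
        have h6 := Finset.card_insert_le b (S'.filter fun i => z i₀ < z i)
        omega
      · have hsub : insert b (S'.filter fun i => z i₀ ≤ z i) ⊆
            S.filter fun i => z i₀ ≤ z i := by
          intro x hx
          rcases Finset.mem_insert.mp hx with rfl | hx
          · exact Finset.mem_filter.mpr ⟨hbS, hb i₀ hi₀S⟩
          · rw [Finset.mem_filter] at hx ⊢
            exact ⟨Finset.mem_of_mem_erase hx.1, hx.2⟩
        have hb' : b ∉ S'.filter fun i => z i₀ ≤ z i := fun h =>
          (Finset.mem_erase.mp (Finset.mem_filter.mp h).1).1 rfl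
        have h5 := Finset.card_le_card hsub
        rw [Finset.card_insert_of_notMem hb'] at h5
        omega

lemma kth_unique {m ℓ : ℕ} (g : Fin m → WithBot ℤ) (a b : WithBot ℤ)
    (ha1 : {i : Fin m | a < g i}.ncard < ℓ) (ha2 : ℓ ≤ {i : Fin m | a ≤ g i}.ncard)
    (hb1 : {i : Fin m | b < g i}.ncard < ℓ) (hb2 : ℓ ≤ {i : Fin m | b ≤ g i}.ncard) :
    a = b := by
  rcases lt_trichotomy a b with h | h | h
  · exfalso
    have hsub : {i : Fin m | b ≤ g i} ⊆ {i : Fin m | a < g i} :=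
      fun i hi => lt_of_lt_of_le h hi
    have := Set.ncard_le_ncard hsub (Set.toFinite _)
    omega
  · exact h
  · exfalso
    have hsub : {i : Fin m | a ≤ g i} ⊆ {i : Fin m | b < g i} :=
      fun i hi => lt_of_lt_of_le h hi
    have := Set.ncard_le_ncard hsub (Set.toFinite _)
    omega

/-- if `f₁, …, f_m` are eventually quasi-polynomial with values in
`ℤ ∪ {−∞}`, then so is the function whose value at `t` is the `ℓ`-th largest value,
with multiplicity, among `f₁(t), …, f_m(t)` (which is `−∞` when `ℓ > m`). -/
theorem kth_largest_of_eqps_eqp (m ℓ : ℕ) (hm : 0 < m) (hl : 0 < ℓ)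
    (fs : Fin m → ℕ → WithBot ℤ) (hfs : ∀ i, IsEQPBot (fs i))
    (f : ℕ → WithBot ℤ)
    (hf : ∃ N : ℕ, ∀ t : ℕ, N ≤ t →
      (m < ℓ ∧ f t = ⊥) ∨
      ({i : Fin m | f t < fs i t}.ncard < ℓ ∧
        ℓ ≤ {i : Fin m | f t ≤ fs i t}.ncard)) :
    IsEQPBot f := by
  classical
  obtain ⟨Nf, hNf⟩ := hf
  choose d hI using hfs
  set D : ℕ := Finset.univ.prod d with hD
  have hDpos : 0 < D := Finset.prod_pos (fun i _ => (hI i).1)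
  have hdvd : ∀ i, d i ∣ D := fun i => Finset.dvd_prod_of_mem d (Finset.mem_univ i)
  refine ⟨D, hDpos, fun r hr => ?_⟩
  have key : ∀ i, ∃ (R : Polynomial ℚ) (N : ℕ),
      (∀ t, N ≤ t → t % D = r → ∃ z : ℤ, fs i t = (z : WithBot ℤ) ∧ (z : ℚ) = R.eval (t : ℚ)) ∨
      (∀ t, N ≤ t → t % D = r → fs i t = ⊥) := by
    intro i
    have hmodeq : ∀ t : ℕ, t % D = r → t % d i = r % d i := by
      intro t htr
      rw [← htr, Nat.mod_mod_of_dvd t (hdvd i)]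
    rcases (hI i).2 (r % d i) (Nat.mod_lt r (hI i).1) with ⟨R, N, hRN⟩ | ⟨N, hN⟩
    · exact ⟨R, N, Or.inl fun t ht htr => hRN t ht (hmodeq t htr)⟩
    · exact ⟨0, N, Or.inr fun t ht htr => hN t ht (hmodeq t htr)⟩
  choose R N hRN using key
  set S : Finset (Fin m) := Finset.univ.filter
    (fun i => ∀ t, N i ≤ t → t % D = r →
      ∃ z : ℤ, fs i t = (z : WithBot ℤ) ∧ (z : ℚ) = (R i).eval (t : ℚ)) with hSdef
  have hS : ∀ i ∈ S, ∀ t, N i ≤ t → t % D = r →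
      ∃ z : ℤ, fs i t = (z : WithBot ℤ) ∧ (z : ℚ) = (R i).eval (t : ℚ) := by
    intro i hi
    exact (Finset.mem_filter.mp hi).2
  have hSc : ∀ i ∉ S, ∀ t, N i ≤ t → t % D = r → fs i t = ⊥ := by
    intro i hi
    have hni : ¬ (∀ t, N i ≤ t → t % D = r →
        ∃ z : ℤ, fs i t = (z : WithBot ℤ) ∧ (z : ℚ) = (R i).eval (t : ℚ)) := by
      intro h
      exact hi (Finset.mem_filter.mpr ⟨Finset.mem_univ i, h⟩)
    exact (hRN i).resolve_left hni
  set Nmax : ℕ := Finset.univ.sup N with hNmax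
  have hNle : ∀ i, N i ≤ Nmax := fun i => Finset.le_sup (Finset.mem_univ i)
  have hsgn := fun p : Fin m × Fin m => sign_stable (R p.2 - R p.1)
  choose Ms hMs using hsgn
  set Msign : ℕ := Finset.univ.sup Ms with hMsign
  have hcmp : ∀ i j : Fin m, ∀ s t : ℕ, Msign ≤ s → Msign ≤ t →
      (((R i).eval (s : ℚ) < (R j).eval (s : ℚ) ↔ (R i).eval (t : ℚ) < (R j).eval (t : ℚ)) ∧
       ((R i).eval (s : ℚ) ≤ (R j).eval (s : ℚ) ↔ (R i).eval (t : ℚ) ≤ (R j).eval (t : ℚ))) := by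
    intro i j s t hs ht
    have hle : Ms (i, j) ≤ Msign := Finset.le_sup (Finset.mem_univ (i, j))
    have h := hMs (i, j) s t (le_trans hle hs) (le_trans hle ht)
    simp only [Polynomial.eval_sub] at h
    constructor
    · rw [← sub_pos, ← sub_pos (b := (R i).eval (t : ℚ))]
      exact h.1
    · rw [← sub_nonneg, ← sub_nonneg (b := (R i).eval (t : ℚ))]
      exact h.2
  by_cases hcase : S.card < ℓ
  · -- eventually ⊥
    refine Or.inr ⟨max Nf Nmax, fun t ht htr => ?_⟩
    have htNf : Nf ≤ t := le_trans (le_max_left _ _) ht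
    have htN : ∀ i, N i ≤ t := fun i => le_trans (le_trans (hNle i) (le_max_right _ _)) ht
    rcases hNf t htNf with ⟨_, h⟩ | ⟨h1, h2⟩
    · exact h
    · by_contra hne
      have hsub : {i : Fin m | f t ≤ fs i t} ⊆ ↑S := by
        intro i hi
        by_contra hiS
        have hbot : fs i t = ⊥ := hSc i (fun h => hiS (Finset.mem_coe.mpr h)) t (htN i) htr
        have hle' : f t ≤ fs i t := hi
        rw [hbot] at hle'
        exact hne (le_bot_iff.mp hle')
      have hle := Set.ncard_le_ncard hsub (S.finite_toSet)
      rw [Set.ncard_coe_finset] at hle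
      omega
  · -- polynomial case
    push_neg at hcase
    set z : Fin m → ℚ := fun i => (R i).eval (Msign : ℚ) with hz
    obtain ⟨i₀, hi₀, hc1, hc2⟩ := exists_kth z ℓ hl S hcase
    refine Or.inl ⟨R i₀, max (max Nf Nmax) Msign, fun t ht htr => ?_⟩
    have htNf : Nf ≤ t := le_trans (le_trans (le_max_left _ _) (le_max_left _ _)) ht
    have htN : ∀ i, N i ≤ t := fun i =>
      le_trans (le_trans (le_trans (hNle i) (le_max_right _ _)) (le_max_left _ _)) ht
    have htM : Msign ≤ t := le_trans (le_max_right _ _) ht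
    obtain ⟨w, hw, hwR⟩ := hS i₀ hi₀ t (htN i₀) htr
    refine ⟨w, ?_, hwR⟩
    have hA : {i : Fin m | (w : WithBot ℤ) < fs i t} = ↑(S.filter fun i => z i₀ < z i) := by
      ext i
      simp only [Set.mem_setOf_eq, Finset.coe_filter, Set.mem_setOf_eq]
      constructor
      · intro h
        by_cases hiS : i ∈ S
        · obtain ⟨v, hv, hvR⟩ := hS i hiS t (htN i) htr
          rw [hv] at h
          have hwv : w < v := WithBot.coe_lt_coe.mp h
          have hlt : (R i₀).eval (t : ℚ) < (R i).eval (t : ℚ) := by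
            rw [← hwR, ← hvR]
            exact_mod_cast hwv
          exact ⟨hiS, ((hcmp i₀ i Msign t le_rfl htM).1).mpr hlt⟩
        · rw [hSc i hiS t (htN i) htr] at h
          exact absurd h (by simp)
      · rintro ⟨hiS, hzi⟩
        obtain ⟨v, hv, hvR⟩ := hS i hiS t (htN i) htr
        have hlt : (R i₀).eval (t : ℚ) < (R i).eval (t : ℚ) :=
          ((hcmp i₀ i Msign t le_rfl htM).1).mp hzi
        have hwv : (w : ℚ) < (v : ℚ) := by rw [hwR, hvR]; exact hlt
        have hwv' : w < v := by exact_mod_cast hwv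
        rw [hv]
        exact WithBot.coe_lt_coe.mpr hwv'
    have hB : {i : Fin m | (w : WithBot ℤ) ≤ fs i t} = ↑(S.filter fun i => z i₀ ≤ z i) := by
      ext i
      simp only [Set.mem_setOf_eq, Finset.coe_filter, Set.mem_setOf_eq]
      constructor
      · intro h
        by_cases hiS : i ∈ S
        · obtain ⟨v, hv, hvR⟩ := hS i hiS t (htN i) htr
          rw [hv] at h
          have hwv : w ≤ v := WithBot.coe_le_coe.mp h
          have hle : (R i₀).eval (t : ℚ) ≤ (R i).eval (t : ℚ) := by
            rw [← hwR, ← hvR]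
            exact_mod_cast hwv
          exact ⟨hiS, ((hcmp i₀ i Msign t le_rfl htM).2).mpr hle⟩
        · rw [hSc i hiS t (htN i) htr] at h
          exact absurd h (by simp)
      · rintro ⟨hiS, hzi⟩
        obtain ⟨v, hv, hvR⟩ := hS i hiS t (htN i) htr
        have hle : (R i₀).eval (t : ℚ) ≤ (R i).eval (t : ℚ) :=
          ((hcmp i₀ i Msign t le_rfl htM).2).mp hzi
        have hwv : (w : ℚ) ≤ (v : ℚ) := by rw [hwR, hvR]; exact hle
        have hwv' : w ≤ v := by exact_mod_cast hwv
        rw [hv]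
        exact WithBot.coe_le_coe.mpr hwv'
    have hwc1 : {i : Fin m | (w : WithBot ℤ) < fs i t}.ncard < ℓ := by
      rw [hA, Set.ncard_coe_finset]; exact hc1
    have hwc2 : ℓ ≤ {i : Fin m | (w : WithBot ℤ) ≤ fs i t}.ncard := by
      rw [hB, Set.ncard_coe_finset]; exact hc2
    rcases hNf t htNf with ⟨hml, _⟩ | ⟨hf1, hf2⟩
    · exfalso
      have hSm : S.card ≤ m := by
        have := Finset.card_le_univ S
        simpa using this
      omega
    · exact kth_unique (fun i => fs i t) (f t) ((w : WithBot ℤ)) hf1 hf2 hwc1 hwc2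
end
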